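/- arXiv:0903.2567 — 2 statements merged into one kernel-verified Lean document; each statement's English description precedes it below -/
import Mathlib

section
/- Let X ⊆ X̄ and Y ⊆ Ȳ be convex closures of Boolean metric spaces over a Boolean ring B. Every contractive map f : X → Y extends to a unique contractive map f̄ : X̄ → Ȳ. Moreover, f̄ is an immersion if and only if f is an immersion, and if f is an isometry then f̄ is an isometry. -/
/-!
Let `X` be a convex closure of `S` and `Y` one of `T`. Every `x : X` is a convex combination
`Σ aᵢ xᵢ` of points of `S`, and a contractive map `F` preserves convex combinations, since
`aᵢ d(x, xᵢ) = 0` forces `aᵢ d(F x, F xᵢ) = 0`. Hence a contractive extension of `f` must send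
`x` to the unique convex combination `Σ aᵢ f(xᵢ)`, which exists because `Y` is convex.
The distance between `Σ aᵢ xᵢ` and `Σ bⱼ yⱼ` is computed piecewise: on the part `aᵢ bⱼ` of `B`
it agrees with `d(xᵢ, yⱼ)`. So contractivity and preservation of distances propagate from `S`
to `X`, and surjectivity follows by pulling back a convex combination of points of `T`.
-/

/-- The order on a Boolean ring: `a ≤ b` iff `a * b = a`. -/
def ble {B : Type} [BooleanRing B] (a b : B) : Prop := a * b = a

/-- The join on a Boolean ring: `a ∨ b = a + b + a * b`. -/
def bjoin {B : Type} [BooleanRing B] (a b : B) : B := a + b + a * b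

/-- A Boolean metric space over a Boolean ring `B`: `d x y = 0` iff `x = y`,
`d` is symmetric, and `d x z ≤ d x y ∨ d y z`. -/
structure BooleanMetric (B : Type) [BooleanRing B] (X : Type) where
  d : X → X → B
  d_eq_zero : ∀ x y, d x y = 0 ↔ x = y
  d_symm : ∀ x y, d x y = d y x
  d_tri : ∀ x y z, ble (d x z) (bjoin (d x y) (d y z))

/-- The coefficients `a i` have pairwise zero products. -/
def PairwiseOrthCoeffs {B : Type} [BooleanRing B] {k : ℕ} (a : Fin k → B) : Prop :=
  ∀ i j, i ≠ j → a i * a j = 0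

/-- `x` is a convex combination of `x₁, …, xₖ` with coefficients `a₁, …, aₖ`,
i.e. `aᵢ · d(x, xᵢ) = 0` for all `i`. -/
def IsConvComb {B X : Type} [BooleanRing B] (m : BooleanMetric B X) {k : ℕ}
    (a : Fin k → B) (xs : Fin k → X) (x : X) : Prop :=
  ∀ i, a i * m.d x (xs i) = 0

/-- A subset `S` is convex: every convex combination of points of `S` (with pairwise
disjoint coefficients summing to `1`) exists in `S`. -/
def IsConvexSubspace {B X : Type} [BooleanRing B] (m : BooleanMetric B X) (S : Set X) : Prop :=
  ∀ (k : ℕ) (a : Fin k → B) (xs : Fin k → X), (∀ i, xs i ∈ S) →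
    PairwiseOrthCoeffs a → (∑ i, a i) = 1 → ∃ x ∈ S, IsConvComb m a xs x

/-- A subset `S` is a CFG-space: it is convex and there are finitely many points of `S`
of which every point of `S` is a convex combination. -/
def IsCFGSubspace {B X : Type} [BooleanRing B] (m : BooleanMetric B X) (S : Set X) : Prop :=
  IsConvexSubspace m S ∧
  ∃ (k : ℕ) (xs : Fin k → X), (∀ i, xs i ∈ S) ∧
    ∀ x ∈ S, ∃ a : Fin k → B, PairwiseOrthCoeffs a ∧ (∑ i, a i) = 1 ∧ IsConvComb m a xs x

/-- A contractive map: `d(f x, f y) ≤ d(x, y)`. -/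
def Contractive {B X Y : Type} [BooleanRing B] (mX : BooleanMetric B X) (mY : BooleanMetric B Y)
    (f : X → Y) : Prop :=
  ∀ x y, ble (mY.d (f x) (f y)) (mX.d x y)

/-- `sm a x` is the convex combination `a x + (a+1) 0` of `x` and the base point `z`
with coefficients `a` and `a + 1`. -/
def IsScalarMul {B X : Type} [BooleanRing B] (m : BooleanMetric B X) (z : X)
    (sm : B → X → X) : Prop :=
  ∀ a x, a * m.d (sm a x) x = 0 ∧ (a + 1) * m.d (sm a x) z = 0

/-- `x ⊥ y`, i.e. `x ⋆ y = (d(x,y)+1) x = 0`. -/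
def Orth {B X : Type} [BooleanRing B] (m : BooleanMetric B X) (z : X) (sm : B → X → X)
    (x y : X) : Prop :=
  sm (m.d x y + 1) x = z

/-- `x` is the convex combination of `0, x₁, …, xₖ` with coefficients
`a₀ = 1 + a₁ + ⋯ + aₖ, a₁, …, aₖ`. -/
def ConvCombWithZero {B X : Type} [BooleanRing B] (m : BooleanMetric B X) (z : X) {k : ℕ}
    (a : Fin k → B) (xs : Fin k → X) (x : X) : Prop :=
  PairwiseOrthCoeffs a ∧ (∀ i, a i * m.d x (xs i) = 0) ∧ (1 + ∑ i, a i) * m.d x z = 0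

/-- `x₁, …, xₖ` is a referential of `(X, z)`: the `xᵢ` are nonzero, pairwise orthogonal,
and every point of `X` is a convex combination of `0, x₁, …, xₖ`. -/
def IsReferential {B X : Type} [BooleanRing B] (m : BooleanMetric B X) (z : X)
    (sm : B → X → X) {k : ℕ} (xs : Fin k → X) : Prop :=
  (∀ i, xs i ≠ z) ∧ (∀ i j, i ≠ j → Orth m z sm (xs i) (xs j)) ∧
  ∀ x : X, ∃ a : Fin k → B, ConvCombWithZero m z a xs x

/-- The whole space is a convex closure of the subset `S`: it is convex and every point
is a convex combination of points of `S`. -/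
def IsConvexClosure {B X : Type} [BooleanRing B] (m : BooleanMetric B X) (S : Set X) : Prop :=
  IsConvexSubspace m Set.univ ∧
  ∀ x : X, ∃ (k : ℕ) (a : Fin k → B) (xs : Fin k → X),
    (∀ i, xs i ∈ S) ∧ PairwiseOrthCoeffs a ∧ (∑ i, a i) = 1 ∧ IsConvComb m a xs x

/-- A finite set `R` is a referential of `(X, z)` (set version). -/
def IsReferentialSet {B X : Type} [BooleanRing B] (m : BooleanMetric B X) (z : X)
    (sm : B → X → X) (R : Finset X) : Prop :=
  z ∉ R ∧ (∀ x ∈ R, ∀ y ∈ R, x ≠ y → Orth m z sm x y) ∧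
  ∀ u : X, ∃ a : X → B,
    (∀ x ∈ R, ∀ y ∈ R, x ≠ y → a x * a y = 0) ∧
    (∀ x ∈ R, a x * m.d u x = 0) ∧ (1 + ∑ x ∈ R, a x) * m.d u z = 0

section PartitionOfUnity

variable {R ι κ : Type*} [Semiring R] [Fintype ι] [Fintype κ]

theorem eq_of_forall_mul_eq_of_sum_eq_one {a : ι → R} (ha : ∑ i, a i = 1) {c e : R}
    (h : ∀ i, a i * c = a i * e) : c = e :=
  calc c = (∑ i, a i) * c := by rw [ha, one_mul]
    _ = (∑ i, a i) * e := by simp only [Finset.sum_mul, h]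
    _ = e := by rw [ha, one_mul]

theorem sum_prod_mul_eq_one {a : ι → R} {b : κ → R} (ha : ∑ i, a i = 1) (hb : ∑ j, b j = 1) :
    ∑ p : ι × κ, a p.1 * b p.2 = 1 := by
  rw [Fintype.sum_prod_type, ← Finset.sum_mul_sum, ha, hb, one_mul]

end PartitionOfUnity

variable {B : Type} [BooleanRing B]

theorem ble_mul_left {c e : B} (h : ble c e) (a : B) : ble (a * c) (a * e) := by
  unfold ble at h ⊢
  linear_combination a * h + c * e * BooleanRing.mul_self a

theorem ble_of_forall_ble_mul {ι : Type*} [Fintype ι] {a : ι → B} (ha : ∑ i, a i = 1)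
    {c e : B} (h : ∀ i, ble (a i * c) (a i * e)) : ble c e :=
  eq_of_forall_mul_eq_of_sum_eq_one ha fun i => by
    have hi := h i
    unfold ble at hi
    linear_combination hi - c * e * BooleanRing.mul_self (a i)

namespace BooleanMetric

variable {X : Type} (m : BooleanMetric B X)

@[simp]
theorem d_self (x : X) : m.d x x = 0 :=
  (m.d_eq_zero x x).mpr rfl

theorem mul_d_eq_of_mul_d_eq_zero {a : B} {x y : X} (h : a * m.d x y = 0) (w : X) :
    a * m.d x w = a * m.d y w := by
  have hxy := m.d_tri x y w
  have hyx := m.d_tri y x w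
  unfold ble bjoin at hxy hyx
  have h' : a * m.d y x = 0 := by rw [m.d_symm]; exact h
  linear_combination (-a) * hxy + a * hyx + (m.d x w + m.d x w * m.d y w) * h
    - (m.d y w + m.d y w * m.d x w) * h'

theorem mul_mul_d_eq {a b : B} {x y x' y' : X} (ha : a * m.d x x' = 0) (hb : b * m.d y y' = 0) :
    a * b * m.d x y = a * b * m.d x' y' :=
  calc a * b * m.d x y = b * (a * m.d x y) := by ring
    _ = a * (b * m.d y x') := by rw [m.mul_d_eq_of_mul_d_eq_zero ha, m.d_symm x' y]; ring
    _ = a * b * m.d x' y' := by rw [m.mul_d_eq_of_mul_d_eq_zero hb, m.d_symm y' x']; ring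

theorem injective_of_d_eq {Y : Type} {mY : BooleanMetric B Y} {F : X → Y}
    (hF : ∀ x y, mY.d (F x) (F y) = m.d x y) : Function.Injective F := fun x y hxy =>
  (m.d_eq_zero x y).mp (by rw [← hF, hxy, d_self])

end BooleanMetric

namespace IsConvComb

variable {X Y : Type} {mX : BooleanMetric B X} {mY : BooleanMetric B Y}
  {k l : ℕ} {a : Fin k → B} {b : Fin l → B} {xs : Fin k → X} {ys : Fin l → X} {x y : X}

theorem of_ble (hx : IsConvComb mX a xs x) {us : Fin k → Y} {u : Y}
    (h : ∀ i, ble (mY.d u (us i)) (mX.d x (xs i))) : IsConvComb mY a us u := fun i => by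
  rw [← h i, mul_left_comm, hx i, mul_zero]

theorem map (hx : IsConvComb mX a xs x) {F : X → Y} (hF : Contractive mX mY F) :
    IsConvComb mY a (fun i => F (xs i)) (F x) :=
  hx.of_ble fun i => hF x (xs i)

theorem unique {x' : X} (hx : IsConvComb mX a xs x) (hx' : IsConvComb mX a xs x')
    (ha : ∑ i, a i = 1) : x = x' :=
  (mX.d_eq_zero x x').mp <| eq_of_forall_mul_eq_of_sum_eq_one ha fun i => by
    rw [mX.mul_d_eq_of_mul_d_eq_zero (hx i), mX.d_symm, hx' i, mul_zero]

variable {us : Fin k → Y} {vs : Fin l → Y} {u v : Y}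

theorem ble_d (hx : IsConvComb mX a xs x) (ha : ∑ i, a i = 1)
    (hy : IsConvComb mX b ys y) (hb : ∑ j, b j = 1)
    (hu : IsConvComb mY a us u) (hv : IsConvComb mY b vs v)
    (h : ∀ i j, ble (mY.d (us i) (vs j)) (mX.d (xs i) (ys j))) :
    ble (mY.d u v) (mX.d x y) :=
  ble_of_forall_ble_mul (sum_prod_mul_eq_one ha hb) fun p => by
    rw [mY.mul_mul_d_eq (hu p.1) (hv p.2), mX.mul_mul_d_eq (hx p.1) (hy p.2)]
    exact ble_mul_left (h p.1 p.2) _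

theorem d_eq (hx : IsConvComb mX a xs x) (ha : ∑ i, a i = 1)
    (hy : IsConvComb mX b ys y) (hb : ∑ j, b j = 1)
    (hu : IsConvComb mY a us u) (hv : IsConvComb mY b vs v)
    (h : ∀ i j, mY.d (us i) (vs j) = mX.d (xs i) (ys j)) :
    mY.d u v = mX.d x y :=
  eq_of_forall_mul_eq_of_sum_eq_one (sum_prod_mul_eq_one ha hb) fun p => by
    rw [mY.mul_mul_d_eq (hu p.1) (hv p.2), mX.mul_mul_d_eq (hx p.1) (hy p.2), h]

end IsConvComb

section Extension

variable {X Y : Type} {mX : BooleanMetric B X} {mY : BooleanMetric B Y} {S : Set X} {T : Set Y}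

theorem exists_contractive_extension (hX : IsConvexClosure mX S)
    (hY : IsConvexSubspace mY Set.univ) {f : X → Y}
    (hf : ∀ x ∈ S, ∀ y ∈ S, ble (mY.d (f x) (f y)) (mX.d x y)) :
    ∃ F : X → Y, Contractive mX mY F ∧ Set.EqOn F f S := by
  choose k a xs hxs horth hsum hcomb using hX.2
  choose F _ hF using fun x =>
    hY (k x) (a x) (fun i => f (xs x i)) (fun _ => Set.mem_univ _) (horth x) (hsum x)
  refine ⟨F, fun x y => ?_, fun x hx => ?_⟩
  · exact (hcomb x).ble_d (hsum x) (hcomb y) (hsum y) (hF x) (hF y)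
      fun i j => hf _ (hxs x i) _ (hxs y j)
  · exact (hF x).unique ((hcomb x).of_ble fun i => hf x hx _ (hxs x i)) (hsum x)

namespace Contractive

variable {F G : X → Y}

theorem eq_of_eqOn (hX : IsConvexClosure mX S) (hF : Contractive mX mY F)
    (hG : Contractive mX mY G) (hFG : Set.EqOn F G S) : F = G := by
  funext x
  obtain ⟨k, a, xs, hxs, -, ha, hx⟩ := hX.2 x
  have hGxs : (fun i => G (xs i)) = fun i => F (xs i) := funext fun i => (hFG (hxs i)).symm
  exact (hx.map hF).unique (hGxs ▸ hx.map hG) ha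

theorem d_eq_iff (hX : IsConvexClosure mX S) (hF : Contractive mX mY F) :
    (∀ x y, mY.d (F x) (F y) = mX.d x y) ↔ ∀ x ∈ S, ∀ y ∈ S, mY.d (F x) (F y) = mX.d x y := by
  refine ⟨fun h x _ y _ => h x y, fun h x y => ?_⟩
  obtain ⟨k, a, xs, hxs, -, ha, hx⟩ := hX.2 x
  obtain ⟨l, b, ys, hys, -, hb, hy⟩ := hX.2 y
  exact hx.d_eq ha hy hb (hx.map hF) (hy.map hF) fun i j => h _ (hxs i) _ (hys j)

theorem surjective (hX : IsConvexSubspace mX Set.univ) (hY : IsConvexClosure mY T)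
    (hF : Contractive mX mY F) (hFST : Set.SurjOn F S T) : Function.Surjective F := by
  intro w
  obtain ⟨l, b, ts, hts, horth, hb, hw⟩ := hY.2 w
  choose xs _ hxs using fun j => hFST (hts j)
  obtain ⟨x, -, hx⟩ := hX l b xs (fun _ => Set.mem_univ _) horth hb
  exact ⟨x, (hx.map hF).unique (funext hxs ▸ hw) hb⟩

end Contractive

end Extension

theorem stmt6_general {B X Y : Type} [BooleanRing B]
    (mX : BooleanMetric B X) (mY : BooleanMetric B Y)
    (S : Set X) (T : Set Y) (hX : IsConvexClosure mX S) (hY : IsConvexClosure mY T)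
    (f : X → Y)
    (hf : ∀ x ∈ S, ∀ y ∈ S, ble (mY.d (f x) (f y)) (mX.d x y)) :
    (∃! F : X → Y, Contractive mX mY F ∧ ∀ x ∈ S, F x = f x) ∧
    ∀ F : X → Y, Contractive mX mY F → (∀ x ∈ S, F x = f x) →
      ((∀ x y, mY.d (F x) (F y) = mX.d x y) ↔
        ∀ x ∈ S, ∀ y ∈ S, mY.d (f x) (f y) = mX.d x y) ∧
      ((∀ x ∈ S, ∀ y ∈ S, mY.d (f x) (f y) = mX.d x y) → Set.BijOn f S T →
        Function.Bijective F) := by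
  obtain ⟨F, hF, hFf⟩ := exists_contractive_extension hX hY.1 hf
  refine ⟨⟨F, ⟨hF, hFf⟩, fun G ⟨hG, hGf⟩ => hG.eq_of_eqOn hX hF fun x hx => ?_⟩, ?_⟩
  · rw [hGf x hx, hFf hx]
  intro G hG hGf
  have hiff : (∀ x y, mY.d (G x) (G y) = mX.d x y) ↔
      ∀ x ∈ S, ∀ y ∈ S, mY.d (f x) (f y) = mX.d x y := by
    rw [hG.d_eq_iff hX]
    exact forall₂_congr fun x hx => forall₂_congr fun y hy => by rw [hGf x hx, hGf y hy]
  refine ⟨hiff, fun hfd hbij => ⟨mX.injective_of_d_eq (hiff.2 hfd), ?_⟩⟩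
  exact hG.surjective hX.1 hY (hbij.surjOn.congr fun x hx => (hGf x hx).symm)

/-- Extension of contractive maps to convex closures: a contractive map `f : S → T`
between subsets with convex closures extends to a unique contractive map on the whole
closures; the extension is an immersion iff `f` is, and if `f` is an isometry of `S`
onto `T`, the extension is an isometry. -/
theorem stmt6 {B X Y : Type} [BooleanRing B]
    (mX : BooleanMetric B X) (mY : BooleanMetric B Y)
    (S : Set X) (T : Set Y) (hX : IsConvexClosure mX S) (hY : IsConvexClosure mY T)
    (f : X → Y) (hmap : ∀ x ∈ S, f x ∈ T)
    (hf : ∀ x ∈ S, ∀ y ∈ S, ble (mY.d (f x) (f y)) (mX.d x y)) :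
    (∃! F : X → Y, Contractive mX mY F ∧ ∀ x ∈ S, F x = f x) ∧
    ∀ F : X → Y, Contractive mX mY F → (∀ x ∈ S, F x = f x) →
      ((∀ x y, mY.d (F x) (F y) = mX.d x y) ↔
        ∀ x ∈ S, ∀ y ∈ S, mY.d (f x) (f y) = mX.d x y) ∧
      ((∀ x ∈ S, ∀ y ∈ S, mY.d (f x) (f y) = mX.d x y) → Set.BijOn f S T →
        Function.Bijective F) :=
  stmt6_general mX mY S T hX hY f hf
end

section
/- Let A be a CFG-ring and U ⊆ Aⁿ. Then U is an algebraic variety over A if and only if U, with the metric d(x,y) = e(x₁−y₁) ∨ ⋯ ∨ e(xₙ−yₙ) restricted from Aⁿ, is a CFG-space over B(A). -/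
/-!
The key translation is `z * d x y = 0 ↔ ∀ c, z * (x c - y c) = 0`: the metric vanishes on an
idempotent `z` exactly where the coordinates agree. A variety is convex because evaluating a
polynomial commutes with gluing points along a partition of unity. It is finitely generated
because `Aⁿ` is (refine the generating partitions of the coordinates) and every point of `Aⁿ`
can be retracted into a nonempty variety without moving it wherever it already agrees with a
point of the variety. Conversely, a CFG-space with generators `y₁, …, yₖ` is the zero set of the
polynomials `∏ᵢ (X (f i) - yᵢ (f i))`, `f : Fin k → Fin n`: a common zero `x` has
`∏ᵢ d x yᵢ = 0`, so it agrees with some `yᵢ` on each piece of a partition of unity, and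
convexity glues these pieces into a point of the space equal to `x`.
-/

/-- The order on idempotents of a commutative ring: `a ≤ b` iff `a * b = a`. -/
def ale {A : Type} [CommRing A] (a b : A) : Prop := a * b = a

/-- The join `v 0 ∨ v 1 ∨ ⋯ ∨ v (n-1)` of a finite family of idempotents, where
`a ∨ b = a + b - a * b`. -/
def bigSup {A : Type} [CommRing A] : {n : ℕ} → (Fin n → A) → A
  | 0, _ => 0
  | _ + 1, v => v 0 + bigSup (Fin.tail v) - v 0 * bigSup (Fin.tail v)

/-- `A` is a CFG-ring: a commutative von Neumann regular ring having finitely many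
elements `x₁, …, xₖ` such that every element of `A` is of the form `∑ aᵢ xᵢ` with
`aᵢ` idempotents having pairwise zero products and summing to `1`. -/
def IsCFGRing (A : Type) [CommRing A] : Prop :=
  (∀ a : A, ∃ b, a * b * a = a) ∧
  ∃ (k : ℕ) (xs : Fin k → A), ∀ x : A, ∃ a : Fin k → A,
    (∀ i, a i * a i = a i) ∧ (∀ i j, i ≠ j → a i * a j = 0) ∧ (∑ i, a i) = 1 ∧
    x = ∑ i, a i * xs i

/-- `e` assigns to each `a : A` the unique idempotent `e a` with `aA = (e a)A`. -/
def IsIdemGen {A : Type} [CommRing A] (e : A → A) : Prop :=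
  ∀ a : A, e a * e a = e a ∧ Ideal.span {a} = Ideal.span {e a}

/-- The Boolean metric on `Aⁿ`: `d x y = e(x₁ - y₁) ∨ ⋯ ∨ e(xₙ - yₙ)`. -/
def dVec {A : Type} [CommRing A] (e : A → A) {n : ℕ} (x y : Fin n → A) : A :=
  bigSup fun i => e (x i - y i)

/-- `U` is an algebraic variety: the common zero set of finitely many polynomials. -/
def IsAlgebraicVariety {A : Type} [CommRing A] {n : ℕ} (U : Set (Fin n → A)) : Prop :=
  ∃ (k : ℕ) (ps : Fin k → MvPolynomial (Fin n) A),
    U = {x : Fin n → A | ∀ j, MvPolynomial.eval x (ps j) = 0}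

/-- A subset `S` of a space with `A`-valued Boolean metric `d` is convex: all convex
combinations (with idempotent coefficients having pairwise zero products and summing
to `1`) of points of `S` exist in `S`. -/
def IsConvexSubA {A Z : Type} [CommRing A] (d : Z → Z → A) (S : Set Z) : Prop :=
  ∀ (k : ℕ) (a : Fin k → A) (xs : Fin k → Z), (∀ i, xs i ∈ S) →
    (∀ i, a i * a i = a i) → (∀ i j, i ≠ j → a i * a j = 0) → (∑ i, a i) = 1 →
    ∃ x ∈ S, ∀ i, a i * d x (xs i) = 0

/-- `S` is a CFG-space: convex, and finitely many points of `S` have every point of `S`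
as a convex combination. -/
def IsCFGSubA {A Z : Type} [CommRing A] (d : Z → Z → A) (S : Set Z) : Prop :=
  IsConvexSubA d S ∧
  ∃ (k : ℕ) (xs : Fin k → Z), (∀ i, xs i ∈ S) ∧
    ∀ x ∈ S, ∃ a : Fin k → A,
      (∀ i, a i * a i = a i) ∧ (∀ i j, i ≠ j → a i * a j = 0) ∧ (∑ i, a i) = 1 ∧
      ∀ i, a i * d x (xs i) = 0

open Finset MvPolynomial

section Idempotents

theorem mul_eq_zero_of_dvd {R : Type*} [CommMonoidWithZero R] {z a b : R} (hab : a ∣ b)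
    (h : z * a = 0) : z * b = 0 :=
  zero_dvd_iff.mp (h ▸ mul_dvd_mul_left z hab)

theorem isIdempotentElem_prod {R ι : Type*} [CommMonoid R] (s : Finset ι) {f : ι → R}
    (hf : ∀ i ∈ s, IsIdempotentElem (f i)) : IsIdempotentElem (∏ i ∈ s, f i) := by
  rw [IsIdempotentElem, ← prod_mul_distrib]
  exact prod_congr rfl fun i hi => (hf i hi).eq

variable {R : Type*} [CommRing R]

theorem OrthogonalIdempotents.mul_sum_mul {ι : Type*} [Fintype ι] {a : ι → R}
    (ha : OrthogonalIdempotents a) (t : ι → R) (i : ι) :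
    a i * ∑ j, a j * t j = a i * t i := by
  classical
  simp [mul_sum, ← mul_assoc, ha.mul_eq]

theorem CompleteOrthogonalIdempotents.eq_zero_of_forall_mul_eq_zero {ι : Type*} [Fintype ι]
    {a : ι → R} (ha : CompleteOrthogonalIdempotents a) {x : R} (h : ∀ i, a i * x = 0) :
    x = 0 := by
  rw [← one_mul x, ← ha.complete, sum_mul]
  exact sum_eq_zero fun i _ => h i

theorem CompleteOrthogonalIdempotents.pi {ι : Type*} [Fintype ι] [DecidableEq ι]
    {κ : ι → Type*} [∀ i, Fintype (κ i)] {a : ∀ i, κ i → R}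
    (ha : ∀ i, CompleteOrthogonalIdempotents (a i)) :
    CompleteOrthogonalIdempotents fun g : (∀ i, κ i) => ∏ i, a i (g i) where
  idem g := isIdempotentElem_prod _ fun i _ => (ha i).idem (g i)
  ortho g g' hne := by
    obtain ⟨i, hi⟩ := Function.ne_iff.mp hne
    rw [← prod_mul_distrib]
    exact prod_eq_zero (mem_univ i) ((ha i).ortho hi)
  complete := by
    rw [← Fintype.prod_sum]
    exact prod_eq_one fun i _ => (ha i).complete

/-- Disjointification: `p i = b 0 ⋯ b (i-1) (1 - b i)`. -/
theorem exists_completeOrthogonalIdempotents_mul_eq_zero {k : ℕ} {b : Fin k → R}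
    (hb : ∀ i, IsIdempotentElem (b i)) (hprod : ∏ i, b i = 0) :
    ∃ p : Fin k → R, CompleteOrthogonalIdempotents p ∧ ∀ i, p i * b i = 0 := by
  let B : ℕ → R := fun j => if h : j < k then b ⟨j, h⟩ else 1
  have hBb : ∀ i : Fin k, B i = b i := fun i => dif_pos i.2
  have hB : ∀ j, IsIdempotentElem (B j) := fun j => by
    by_cases h : j < k
    · simpa only [B, dif_pos h] using hb ⟨j, h⟩
    · simpa only [B, dif_neg h] using IsIdempotentElem.one
  let P : ℕ → R := fun j => ∏ l ∈ range j, B l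
  let p : ℕ → R := fun j => P j * (1 - B j)
  have hp_ortho : ∀ i j, i < j → p i * p j = 0 := by
    intro i j hij
    obtain ⟨t, ht⟩ := dvd_prod_of_mem B (mem_range.mpr hij)
    simp only [p, P] at ht ⊢
    rw [ht]
    linear_combination (-(P i * t * (1 - B j))) * (hB i).eq
  refine ⟨fun i => p i, ⟨⟨fun i => ?_, fun i j hij => ?_⟩, ?_⟩, fun i => ?_⟩
  · exact (isIdempotentElem_prod _ fun l _ => hB l).mul (hB i).one_sub
  · rcases lt_or_gt_of_ne (Fin.val_injective.ne hij) with h | h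
    · exact hp_ortho _ _ h
    · rw [mul_comm]; exact hp_ortho _ _ h
  · have htel : ∀ j, p j = P j - P (j + 1) := fun j => by
      simp only [p, P, prod_range_succ]; ring
    rw [Fin.sum_univ_eq_sum_range p, sum_congr rfl fun j _ => htel j, sum_range_sub']
    simp [P, ← Fin.prod_univ_eq_prod_range, hBb, hprod]
  · rw [← hBb]
    linear_combination (-P i) * (hB i).eq

theorem exists_completeOrthogonalIdempotents_pi {κ : Type*} [Fintype κ] {xs : κ → R}
    (hxs : ∀ x : R, ∃ a : κ → R, CompleteOrthogonalIdempotents a ∧ ∀ i, a i * (x - xs i) = 0)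
    {ι : Type*} [Fintype ι] [DecidableEq ι] (x : ι → R) :
    ∃ a : (ι → κ) → R, CompleteOrthogonalIdempotents a ∧ ∀ g c, a g * (x c - xs (g c)) = 0 := by
  choose α hα hαx using fun c => hxs (x c)
  refine ⟨fun g => ∏ c, α c (g c), CompleteOrthogonalIdempotents.pi hα, fun g c => ?_⟩
  obtain ⟨t, ht⟩ := dvd_prod_of_mem (fun c => α c (g c)) (mem_univ c)
  dsimp only
  rw [ht]
  linear_combination t * hαx c (g c)

end Idempotents

section BooleanMetric

variable {A : Type} [CommRing A] {e : A → A}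

theorem IsIdemGen.apply_dvd (he : IsIdemGen e) (a : A) : e a ∣ a :=
  Ideal.span_singleton_le_span_singleton.mp (he a).2.le

theorem IsIdemGen.dvd_apply (he : IsIdemGen e) (a : A) : a ∣ e a :=
  Ideal.span_singleton_le_span_singleton.mp (he a).2.ge

theorem IsIdemGen.mul_eq_zero_iff (he : IsIdemGen e) (z a : A) : z * e a = 0 ↔ z * a = 0 :=
  ⟨mul_eq_zero_of_dvd (he.apply_dvd a), mul_eq_zero_of_dvd (he.dvd_apply a)⟩

theorem bigSup_succ {m : ℕ} (v : Fin (m + 1) → A) :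
    bigSup v = v 0 + bigSup (Fin.tail v) - v 0 * bigSup (Fin.tail v) := rfl

theorem isIdempotentElem_bigSup : ∀ {m : ℕ} {v : Fin m → A},
    (∀ i, IsIdempotentElem (v i)) → IsIdempotentElem (bigSup v)
  | 0, _, _ => by simp [IsIdempotentElem, bigSup]
  | m + 1, v, hv => by
    have hs : IsIdempotentElem (bigSup (Fin.tail v)) := isIdempotentElem_bigSup fun i => hv i.succ
    rw [IsIdempotentElem, bigSup_succ]
    linear_combination (1 + bigSup (Fin.tail v) * bigSup (Fin.tail v) - 2 * bigSup (Fin.tail v))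
      * (hv 0).eq + (1 - v 0) * hs.eq

theorem mul_bigSup_eq_zero_iff : ∀ {m : ℕ} {v : Fin m → A},
    (∀ i, IsIdempotentElem (v i)) → ∀ z : A, z * bigSup v = 0 ↔ ∀ i, z * v i = 0
  | 0, v, _, z => by simp [bigSup]
  | m + 1, v, hv, z => by
    have ih := mul_bigSup_eq_zero_iff (v := Fin.tail v) (fun i => hv i.succ) z
    have hs : IsIdempotentElem (bigSup (Fin.tail v)) := isIdempotentElem_bigSup fun i => hv i.succ
    rw [Fin.forall_fin_succ, bigSup_succ]
    change _ ↔ _ ∧ ∀ i, z * Fin.tail v i = 0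
    rw [← ih]
    set s := bigSup (Fin.tail v)
    constructor
    · intro h
      constructor
      · linear_combination v 0 * h + z * (s - 1) * (hv 0).eq
      · linear_combination s * h + z * (v 0 - 1) * hs.eq
    · rintro ⟨h0, hs'⟩
      linear_combination (1 - s) * h0 + hs'

theorem IsIdemGen.isIdempotentElem_dVec (he : IsIdemGen e) {n : ℕ} (x y : Fin n → A) :
    IsIdempotentElem (dVec e x y) :=
  isIdempotentElem_bigSup fun _ => (he _).1

theorem IsIdemGen.mul_dVec_eq_zero_iff (he : IsIdemGen e) {n : ℕ} (z : A) (x y : Fin n → A) :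
    z * dVec e x y = 0 ↔ ∀ c, z * (x c - y c) = 0 := by
  rw [dVec, mul_bigSup_eq_zero_iff (fun _ => (he _).1)]
  simp only [he.mul_eq_zero_iff]

/-- Distributivity of meets over joins, in annihilator form. -/
theorem mul_prod_bigSup_eq_zero : ∀ {k m : ℕ} {E : Fin k → Fin m → A},
    (∀ i c, IsIdempotentElem (E i c)) → ∀ z : A,
    (∀ f : Fin k → Fin m, z * ∏ i, E i (f i) = 0) → z * ∏ i, bigSup (E i) = 0
  | 0, _, _, _, z, h => by simpa using h Fin.elim0
  | k + 1, m, E, hE, z, h => by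
    have hrest : ∀ c, z * E 0 c * ∏ i : Fin k, bigSup (E i.succ) = 0 := fun c =>
      mul_prod_bigSup_eq_zero (fun i => hE i.succ) _ fun g => by
        simpa [Fin.prod_univ_succ, mul_assoc] using h (Fin.cons c g)
    have h0 := (mul_bigSup_eq_zero_iff (hE 0) (z * ∏ i : Fin k, bigSup (E i.succ))).mpr
      fun c => by linear_combination hrest c
    rw [Fin.prod_univ_succ]
    linear_combination h0

theorem IsIdemGen.prod_dVec_eq_zero (he : IsIdemGen e) {k n : ℕ} {x : Fin n → A}
    {ys : Fin k → Fin n → A} (h : ∀ f : Fin k → Fin n, ∏ i, (x (f i) - ys i (f i)) = 0) :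
    ∏ i, dVec e x (ys i) = 0 := by
  rw [← one_mul (∏ i, dVec e x (ys i))]
  exact mul_prod_bigSup_eq_zero (E := fun i c => e (x c - ys i c))
    (fun _ _ => (he _).1) 1 fun f => by
      rw [one_mul]
      exact zero_dvd_iff.mp (h f ▸ prod_dvd_prod_of_dvd _ _ fun i _ => he.dvd_apply _)

end BooleanMetric

section Varieties

variable {A : Type} [CommRing A] {e : A → A}

def zeroSet {ι : Type*} {n : ℕ} (ps : ι → MvPolynomial (Fin n) A) : Set (Fin n → A) :=
  {x | ∀ j, eval x (ps j) = 0}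

theorem mul_sub_eval_eq_zero {n : ℕ} {z : A} {x y : Fin n → A} (h : ∀ c, z * (x c - y c) = 0)
    (p : MvPolynomial (Fin n) A) : z * (eval x p - eval y p) = 0 := by
  induction p using MvPolynomial.induction_on with
  | C r => simp
  | add p q hp hq => simp only [map_add]; linear_combination hp + hq
  | mul_X p i hp =>
    simp only [map_mul, eval_X]
    linear_combination x i * hp + eval y p * h i

theorem isAlgebraicVariety_of_eq_zeroSet {ι : Type*} [Fintype ι] {n : ℕ} {U : Set (Fin n → A)}
    (ps : ι → MvPolynomial (Fin n) A) (hU : U = zeroSet ps) : IsAlgebraicVariety U := by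
  refine ⟨Fintype.card ι, ps ∘ (Fintype.equivFin ι).symm, hU.trans ?_⟩
  ext x
  exact (Fintype.equivFin ι).symm.forall_congr_right.symm

theorem isCFGSubA_of_fintype {Z : Type} {d : Z → Z → A} {S : Set Z} (hS : IsConvexSubA d S)
    {ι : Type*} [Fintype ι] (xs : ι → Z) (hxs : ∀ i, xs i ∈ S)
    (hgen : ∀ x ∈ S, ∃ a : ι → A, CompleteOrthogonalIdempotents a ∧ ∀ i, a i * d x (xs i) = 0) :
    IsCFGSubA d S := by
  let σ := (Fintype.equivFin ι).symm
  refine ⟨hS, Fintype.card ι, xs ∘ σ, fun j => hxs (σ j), fun x hx => ?_⟩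
  obtain ⟨a, ha, hd⟩ := hgen x hx
  have ha' := (CompleteOrthogonalIdempotents.equiv σ).mpr ha
  exact ⟨a ∘ σ, ha'.idem, fun i j hij => ha'.ortho hij, ha'.complete, fun j => hd (σ j)⟩

theorem IsIdemGen.isConvexSubA_zeroSet (he : IsIdemGen e) {ι : Type*} {n : ℕ}
    (ps : ι → MvPolynomial (Fin n) A) : IsConvexSubA (dVec e) (zeroSet ps) := by
  intro k a xs hxs h_idem h_ortho h_complete
  have ha : CompleteOrthogonalIdempotents a := ⟨⟨h_idem, h_ortho⟩, h_complete⟩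
  let x : Fin n → A := fun c => ∑ l, a l * xs l c
  have hax : ∀ i c, a i * (x c - xs i c) = 0 := fun i c => by
    rw [mul_sub, ha.1.mul_sum_mul, sub_self]
  refine ⟨x, fun j => ha.eq_zero_of_forall_mul_eq_zero fun i => ?_,
    fun i => (he.mul_dVec_eq_zero_iff _ _ _).mpr (hax i)⟩
  linear_combination mul_sub_eval_eq_zero (hax i) (ps j) + a i * hxs i j

/-- The retraction is `r y = (1 - b y) • y + b y • x₀`, where `b y = ⋁ₜ e (pₜ y)` is the
idempotent on which some equation fails at `y`. -/
theorem IsIdemGen.exists_retraction_zeroSet (he : IsIdemGen e) {K n : ℕ}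
    (ps : Fin K → MvPolynomial (Fin n) A) {x₀ : Fin n → A} (hx₀ : x₀ ∈ zeroSet ps) :
    ∃ r : (Fin n → A) → Fin n → A, (∀ y, r y ∈ zeroSet ps) ∧
      ∀ x ∈ zeroSet ps, ∀ y z, (∀ c, z * (x c - y c) = 0) → ∀ c, z * (x c - r y c) = 0 := by
  let b : (Fin n → A) → A := fun y => bigSup fun t => e (eval y (ps t))
  have hb : ∀ y z, z * b y = 0 ↔ ∀ t, z * eval y (ps t) = 0 := fun y z => by
    rw [mul_bigSup_eq_zero_iff (fun _ => (he _).1)]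
    simp only [he.mul_eq_zero_iff]
  have hb_idem : ∀ y, IsIdempotentElem (b y) := fun y => isIdempotentElem_bigSup fun _ => (he _).1
  refine ⟨fun y c => (1 - b y) * y c + b y * x₀ c, fun y t => ?_, fun x hx y z hxy c => ?_⟩
  · have h₁ : ∀ c, (1 - b y) * ((1 - b y) * y c + b y * x₀ c - y c) = 0 := fun c => by
      linear_combination (y c - x₀ c) * (hb_idem y).eq
    have h₂ : ∀ c, b y * ((1 - b y) * y c + b y * x₀ c - x₀ c) = 0 := fun c => by
      linear_combination (x₀ c - y c) * (hb_idem y).eq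
    have hy : (1 - b y) * eval y (ps t) = 0 :=
      (hb y _).mp (by linear_combination -(hb_idem y).eq) t
    linear_combination mul_sub_eval_eq_zero h₁ (ps t) + mul_sub_eval_eq_zero h₂ (ps t) + hy +
      b y * hx₀ t
  · have hzb : z * b y = 0 := (hb y z).mpr fun t => by
      linear_combination -(mul_sub_eval_eq_zero hxy (ps t)) + z * hx t
    linear_combination hxy c + (y c - x₀ c) * hzb

theorem IsCFGRing.exists_generators (hA : IsCFGRing A) :
    ∃ (k : ℕ) (xs : Fin k → A), ∀ x, ∃ a : Fin k → A,
      CompleteOrthogonalIdempotents a ∧ ∀ i, a i * (x - xs i) = 0 := by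
  obtain ⟨k, xs, hxs⟩ := hA.2
  refine ⟨k, xs, fun x => ?_⟩
  obtain ⟨a, h_idem, h_ortho, h_complete, rfl⟩ := hxs x
  have ha : CompleteOrthogonalIdempotents a := ⟨⟨h_idem, h_ortho⟩, h_complete⟩
  exact ⟨a, ha, fun i => by rw [mul_sub, ha.1.mul_sum_mul, sub_self]⟩

theorem IsIdemGen.isCFGSubA_zeroSet (he : IsIdemGen e) (hA : IsCFGRing A) {K n : ℕ}
    (ps : Fin K → MvPolynomial (Fin n) A) : IsCFGSubA (dVec e) (zeroSet ps) := by
  rcases (zeroSet ps).eq_empty_or_nonempty with hempty | ⟨x₀, hx₀⟩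
  · exact ⟨he.isConvexSubA_zeroSet ps, 0, Fin.elim0, Fin.rec0, by simp [hempty]⟩
  obtain ⟨r, hrU, hr⟩ := he.exists_retraction_zeroSet ps hx₀
  obtain ⟨k, xs, hxs⟩ := hA.exists_generators
  refine isCFGSubA_of_fintype (he.isConvexSubA_zeroSet ps)
    (fun g : Fin n → Fin k => r fun c => xs (g c)) (fun g => hrU _) fun x hx => ?_
  obtain ⟨a, ha, hax⟩ := exists_completeOrthogonalIdempotents_pi hxs x
  exact ⟨a, ha, fun g => (he.mul_dVec_eq_zero_iff _ _ _).mpr (hr x hx _ _ (hax g))⟩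

theorem IsIdemGen.prod_sub_eq_zero_of_mul_dVec_eq_zero (he : IsIdemGen e) {k n : ℕ}
    {ys : Fin k → Fin n → A} {x : Fin n → A} {a : Fin k → A}
    (ha : CompleteOrthogonalIdempotents a) (hx : ∀ i, a i * dVec e x (ys i) = 0)
    (f : Fin k → Fin n) : ∏ i, (x (f i) - ys i (f i)) = 0 :=
  ha.eq_zero_of_forall_mul_eq_zero fun l =>
    mul_eq_zero_of_dvd (dvd_prod_of_mem _ (mem_univ l))
      ((he.mul_dVec_eq_zero_iff _ _ _).mp (hx l) (f l))

theorem IsIdemGen.mem_of_forall_prod_sub_eq_zero (he : IsIdemGen e) {k n : ℕ}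
    {U : Set (Fin n → A)} (hconv : IsConvexSubA (dVec e) U) {ys : Fin k → Fin n → A}
    (hys : ∀ i, ys i ∈ U) {x : Fin n → A}
    (hx : ∀ f : Fin k → Fin n, ∏ i, (x (f i) - ys i (f i)) = 0) : x ∈ U := by
  obtain ⟨p, hp, hpx⟩ := exists_completeOrthogonalIdempotents_mul_eq_zero
    (fun i => he.isIdempotentElem_dVec x (ys i)) (he.prod_dVec_eq_zero hx)
  obtain ⟨x', hx'U, hpx'⟩ := hconv k p ys hys hp.idem (fun _ _ hij => hp.ortho hij) hp.complete
  suffices x = x' from this ▸ hx'U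
  funext c
  refine sub_eq_zero.mp (hp.eq_zero_of_forall_mul_eq_zero fun i => ?_)
  linear_combination (he.mul_dVec_eq_zero_iff _ _ _).mp (hpx i) c -
    (he.mul_dVec_eq_zero_iff _ _ _).mp (hpx' i) c

theorem IsIdemGen.isAlgebraicVariety_of_isCFGSubA (he : IsIdemGen e) {n : ℕ}
    {U : Set (Fin n → A)} (hU : IsCFGSubA (dVec e) U) : IsAlgebraicVariety U := by
  obtain ⟨hconv, k, ys, hys, hgen⟩ := hU
  refine isAlgebraicVariety_of_eq_zeroSet
    (fun f : Fin k → Fin n => ∏ i, (X (f i) - C (ys i (f i)))) (Set.ext fun x => ?_)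
  simp only [zeroSet, Set.mem_ofPred_eq, map_prod, map_sub, eval_X, eval_C]
  refine ⟨fun hx f => ?_, he.mem_of_forall_prod_sub_eq_zero hconv hys⟩
  obtain ⟨a, h_idem, h_ortho, h_complete, hxa⟩ := hgen x hx
  exact he.prod_sub_eq_zero_of_mul_dVec_eq_zero ⟨⟨h_idem, h_ortho⟩, h_complete⟩ hxa f

end Varieties

/-- Over a CFG-ring `A`, a subset `U ⊆ Aⁿ` is an algebraic variety iff it is a
CFG-metric subspace of `Aⁿ` (for the metric `d x y = e(x₁-y₁) ∨ ⋯ ∨ e(xₙ-yₙ)`). -/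
theorem stmt15 {A : Type} [CommRing A] (hA : IsCFGRing A)
    (e : A → A) (he : IsIdemGen e)
    {n : ℕ} (U : Set (Fin n → A)) :
    IsAlgebraicVariety U ↔ IsCFGSubA (dVec e) U := by
  constructor
  · rintro ⟨K, ps, rfl⟩
    exact he.isCFGSubA_zeroSet hA ps
  · exact he.isAlgebraicVariety_of_isCFGSubA
end
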